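/- arXiv:1501.00395 — 2 statements merged into one kernel-verified Lean document; each statement's English description precedes it below -/
import Mathlib

section
/- Let {α, S₀, ϑ₁, ϑ₂} be an admissible quadruple, let Λ(x) = [e^{-ixα}ϑ₁, e^{ixα}ϑ₂], S(x) = S₀ + ∫₀ˣ Λ(t) j Λ(t)* dt, and let v(x) = 2ϑ₁*e^{ixα*}S(x)⁻¹e^{ixα}ϑ₂ be the associated pseudo-exponential potential. Then v is bounded on [0, ∞): there exists M > 0 such that ‖v(x)‖ ≤ M for all x ≥ 0, where ‖·‖ denotes the operator norm induced by the ℓ² vector norm. -/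
open Matrix
open scoped ComplexOrder Matrix.Norms.L2Operator

/-- The `m×m` signature matrix `j = diag(I_{m₁}, −I_{m₂})`. -/
noncomputable def sigJ (m₁ m₂ : ℕ) : Matrix (Fin m₁ ⊕ Fin m₂) (Fin m₁ ⊕ Fin m₂) ℂ :=
  Matrix.fromBlocks 1 0 0 (-1)

/-- A quadruple `{α, S₀, ϑ₁, ϑ₂}` is admissible if `S₀` is Hermitian positive definite and
`αS₀ − S₀α* = i(ϑ₁ϑ₁* + ϑ₂ϑ₂*)`. -/
def Admissible {n m₁ m₂ : ℕ} (α S₀ : Matrix (Fin n) (Fin n) ℂ)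
    (θ₁ : Matrix (Fin n) (Fin m₁) ℂ) (θ₂ : Matrix (Fin n) (Fin m₂) ℂ) : Prop :=
  S₀.PosDef ∧ α * S₀ - S₀ * αᴴ = Complex.I • (θ₁ * θ₁ᴴ + θ₂ * θ₂ᴴ)

/-! With `A = iα`, `Λ₁(x) = e^{-xA}ϑ₁` and `Λ₂(x) = e^{xA}ϑ₂`, admissibility reads
`AS₀ + S₀A* = -(ϑ₁ϑ₁* + ϑ₂ϑ₂*)`, and since `S' = Λ₁Λ₁* - Λ₂Λ₂*` this Lyapunov identity
propagates to `AS(x) + S(x)A* = -(Λ₁Λ₁* + Λ₂Λ₂*)` for every `x`. Hence `e^{-xA}S(x)e^{-xA*}`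
has derivative `2(e^{-xA}Λ₁)(e^{-xA}Λ₁)* ≥ 0`, so `S(x) > 0` for `x ≥ 0`. Multiplying the identity
by `S(x)⁻¹` and taking traces gives `tr(Λ₁*S⁻¹Λ₁) + tr(Λ₂*S⁻¹Λ₂) = -2 Re tr A = 2 Im tr α`.
Finally `v = 2Λ₁*S⁻¹Λ₂`, and writing `S⁻¹ = B*B`,
`‖v‖ ≤ 2‖BΛ₁‖‖BΛ₂‖ ≤ ‖BΛ₁‖²_F + ‖BΛ₂‖²_F = 2 Im tr α`. -/

open NormedSpace

theorem hasDerivAt_exp_smul_mul_mul_exp_smul {𝔸 : Type*} [NormedRing 𝔸] [NormedAlgebra ℝ 𝔸]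
    [CompleteSpace 𝔸] (B D : 𝔸) {f : ℝ → 𝔸} {f' : 𝔸} {x : ℝ} (hf : HasDerivAt f f' x) :
    HasDerivAt (fun t : ℝ => exp (t • B) * f t * exp (t • D))
      (B * (exp (x • B) * f x * exp (x • D)) + exp (x • B) * f' * exp (x • D)
        + exp (x • B) * f x * exp (x • D) * D) x := by
  refine (((hasDerivAt_exp_smul_const' B x).mul hf).mul
    (hasDerivAt_exp_smul_const D x)).congr_deriv ?_
  simp only [Pi.mul_apply]
  noncomm_ring

namespace Matrix

section Calculus

variable {ι κ : Type*} [Fintype ι] [Fintype κ]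

theorem hasDerivAt_of_entry_eq_add_integral [DecidableEq κ] {F : ℝ → Matrix ι κ ℂ}
    (hF : Continuous F) {S : ℝ → Matrix ι κ ℂ} {S₀ : Matrix ι κ ℂ}
    (hS : ∀ (x : ℝ) i j, S x i j = S₀ i j + ∫ t in (0 : ℝ)..x, F t i j) (x : ℝ) :
    HasDerivAt S (F x) x := by
  have hS' : S = fun x => S₀ + ∫ t in (0 : ℝ)..x, F t := by
    funext x
    ext i j
    rw [hS, add_apply]
    exact congrArg _ ((LinearMap.toContinuousLinearMap (entryLinearMap ℝ ℂ i j)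
      ).intervalIntegral_comp_comm (hF.intervalIntegrable _ _))
  rw [hS']
  exact (hF.integral_hasStrictDerivAt 0 x).hasDerivAt.const_add S₀

variable [DecidableEq ι]

theorem conjTranspose_exp_smul (B : Matrix ι ι ℂ) (t : ℝ) :
    (exp (t • B))ᴴ = exp (t • Bᴴ) := by
  rw [← exp_conjTranspose, conjTranspose_smul, star_trivial]

theorem exp_smul_mul_exp_smul_neg (B : Matrix ι ι ℂ) (t : ℝ) :
    exp (t • B) * exp (t • -B) = 1 := by
  rw [smul_neg, ← exp_add_of_commute _ _ (Commute.refl (t • B)).neg_right, add_neg_cancel,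
    NormedSpace.exp_zero]

noncomputable def expSmulMul (B : Matrix ι ι ℂ) (θ : Matrix ι κ ℂ) (t : ℝ) : Matrix ι κ ℂ :=
  exp (t • B) * θ

theorem hasDerivAt_expSmulMul_mul_conjTranspose (B : Matrix ι ι ℂ) (θ : Matrix ι κ ℂ) (x : ℝ) :
    HasDerivAt (fun t => expSmulMul B θ t * (expSmulMul B θ t)ᴴ)
      (B * (expSmulMul B θ x * (expSmulMul B θ x)ᴴ)
        + expSmulMul B θ x * (expSmulMul B θ x)ᴴ * Bᴴ) x := by
  have hG : ∀ t, expSmulMul B θ t * (expSmulMul B θ t)ᴴ = exp (t • B) * (θ * θᴴ) * exp (t • Bᴴ) :=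
    fun t => by simp only [expSmulMul, conjTranspose_mul, conjTranspose_exp_smul, Matrix.mul_assoc]
  simp only [hG]
  simpa using hasDerivAt_exp_smul_mul_mul_exp_smul B Bᴴ (hasDerivAt_const x (θ * θᴴ))

theorem IsHermitian.of_hasDerivAt {S F : ℝ → Matrix ι ι ℂ}
    (hS : ∀ t, HasDerivAt S (F t) t) (hF : ∀ t, (F t).IsHermitian) (h₀ : (S 0).IsHermitian)
    (x : ℝ) : (S x).IsHermitian := by
  have hd : ∀ t, HasDerivAt (fun t => (S t)ᴴ - S t) 0 t := fun t =>
    ((hS t).star.sub (hS t)).congr_deriv (sub_eq_zero.2 (hF t))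
  have hconst :=
    is_const_of_deriv_eq_zero (fun t => (hd t).differentiableAt) (fun t => (hd t).deriv) x 0
  simp only [h₀.eq, sub_self] at hconst
  exact sub_eq_zero.1 hconst

theorem PosDef.of_hasDerivAt_posSemidef {W W' : ℝ → Matrix ι ι ℂ}
    (hW : ∀ t, HasDerivAt W (W' t) t) (hW' : ∀ t, (W' t).PosSemidef) (h₀ : (W 0).PosDef)
    {x : ℝ} (hx : 0 ≤ x) (hWx : (W x).IsHermitian) : (W x).PosDef := by
  refine of_dotProduct_mulVec_pos hWx fun y hy =>
    RCLike.pos_iff.2 ⟨?_, hWx.im_star_dotProduct_mulVec_self y⟩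
  let q : Matrix ι ι ℂ →L[ℝ] ℝ := Complex.reCLM.comp <| LinearMap.toContinuousLinearMap
    { toFun := fun M => star y ⬝ᵥ M *ᵥ y
      map_add' := fun M N => by simp only [add_mulVec, dotProduct_add]
      map_smul' := fun c M => by simp only [smul_mulVec, dotProduct_smul, RingHom.id_apply] }
  have hq : ∀ t, HasDerivAt (fun t => q (W t)) (q (W' t)) t :=
    fun t => q.hasFDerivAt.comp_hasDerivAt t (hW t)
  have hmono : MonotoneOn (fun t => q (W t)) (Set.Ici 0) :=
    monotoneOn_of_deriv_nonneg (convex_Ici 0)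
      (fun t _ => (hq t).continuousAt.continuousWithinAt)
      (fun t _ => (hq t).differentiableAt.differentiableWithinAt)
      (fun t _ => (hq t).deriv ▸ (hW' t).re_dotProduct_nonneg y)
  exact (h₀.re_dotProduct_pos hy).trans_le (hmono Set.self_mem_Ici hx hx)

end Calculus

section Norms

variable {ι κ₁ κ₂ : Type*} [Fintype ι] [Fintype κ₁] [Fintype κ₂]

theorem re_trace_conjTranspose_mul_self (C : Matrix ι κ₁ ℂ) :
    (Cᴴ * C).trace.re = ∑ i, ∑ j, ‖C i j‖ ^ 2 := by
  simp only [trace, diag_apply, mul_apply, conjTranspose_apply, Complex.re_sum]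
  rw [Finset.sum_comm]
  refine Finset.sum_congr rfl fun i _ => Finset.sum_congr rfl fun j _ => ?_
  rw [Complex.star_def, Complex.conj_mul', ← Complex.ofReal_pow, Complex.ofReal_re]

variable [DecidableEq κ₁]

theorem l2_opNorm_sq_le_re_trace (C : Matrix ι κ₁ ℂ) :
    ‖C‖ ^ 2 ≤ (Cᴴ * C).trace.re := by
  rw [re_trace_conjTranspose_mul_self, ← Real.sqrt_le_sqrt_iff (by positivity),
    Real.sqrt_sq (norm_nonneg C), l2_opNorm_def]
  refine ContinuousLinearMap.opNorm_le_bound _ (Real.sqrt_nonneg _) fun u => ?_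
  have hrow : ∀ i, ‖∑ j, C i j * u j‖ ^ 2 ≤ (∑ j, ‖C i j‖ ^ 2) * ∑ j, ‖u j‖ ^ 2 := fun i =>
    calc ‖∑ j, C i j * u j‖ ^ 2 ≤ (∑ j, ‖C i j‖ * ‖u j‖) ^ 2 := by
          gcongr
          exact (norm_sum_le _ _).trans_eq (by simp only [norm_mul])
      _ ≤ _ := Finset.sum_mul_sq_le_sq_mul_sq _ _ _
  rw [EuclideanSpace.norm_eq, EuclideanSpace.norm_eq, ← Real.sqrt_mul (by positivity),
    Finset.sum_mul]
  exact Real.sqrt_le_sqrt (Finset.sum_le_sum fun i _ => hrow i)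

variable [DecidableEq ι] [DecidableEq κ₂]

theorem two_mul_l2_opNorm_conjTranspose_mul_le (C₁ : Matrix ι κ₁ ℂ) (C₂ : Matrix ι κ₂ ℂ) :
    2 * ‖C₁ᴴ * C₂‖ ≤ (C₁ᴴ * C₁).trace.re + (C₂ᴴ * C₂).trace.re :=
  calc 2 * ‖C₁ᴴ * C₂‖ ≤ 2 * (‖C₁‖ * ‖C₂‖) := by
        rw [← l2_opNorm_conjTranspose C₁]
        gcongr
        exact l2_opNorm_mul _ _
    _ ≤ ‖C₁‖ ^ 2 + ‖C₂‖ ^ 2 := by nlinarith [sq_nonneg (‖C₁‖ - ‖C₂‖)]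
    _ ≤ _ := add_le_add (l2_opNorm_sq_le_re_trace C₁) (l2_opNorm_sq_le_re_trace C₂)

theorem PosDef.two_mul_l2_opNorm_conjTranspose_mul_inv_mul_le {S : Matrix ι ι ℂ}
    (hS : S.PosDef) (L₁ : Matrix ι κ₁ ℂ) (L₂ : Matrix ι κ₂ ℂ) :
    2 * ‖L₁ᴴ * S⁻¹ * L₂‖ ≤ (L₁ᴴ * S⁻¹ * L₁).trace.re + (L₂ᴴ * S⁻¹ * L₂).trace.re := by
  obtain ⟨B, hB⟩ : ∃ B : Matrix ι ι ℂ, S⁻¹ = Bᴴ * B := by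
    open scoped MatrixOrder in
    exact CStarAlgebra.nonneg_iff_eq_star_mul_self.mp hS.inv.posSemidef.nonneg
  simpa only [hB, conjTranspose_mul, Matrix.mul_assoc]
    using two_mul_l2_opNorm_conjTranspose_mul_le (B * L₁) (B * L₂)

end Norms

end Matrix

section Lyapunov

variable {ι κ₁ κ₂ : Type*} [Fintype ι] [Fintype κ₁] [Fintype κ₂] [DecidableEq ι]

theorem Matrix.re_trace_conjTranspose_mul_inv_mul_add_eq_of_lyapunov {A S : Matrix ι ι ℂ}
    (hS : IsUnit S.det) {L₁ : Matrix ι κ₁ ℂ} {L₂ : Matrix ι κ₂ ℂ}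
    (h : A * S + S * Aᴴ = -(L₁ * L₁ᴴ + L₂ * L₂ᴴ)) :
    (L₁ᴴ * S⁻¹ * L₁).trace.re + (L₂ᴴ * S⁻¹ * L₂).trace.re = -2 * A.trace.re := by
  have htr : (L₁ᴴ * S⁻¹ * L₁).trace + (L₂ᴴ * S⁻¹ * L₂).trace = -(A.trace + Aᴴ.trace) :=
    calc _ = ((L₁ * L₁ᴴ + L₂ * L₂ᴴ) * S⁻¹).trace := by
          rw [trace_mul_cycle, trace_mul_cycle L₂ᴴ, ← trace_add, Matrix.add_mul]
      _ = -(A.trace + Aᴴ.trace) := by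
          rw [← neg_neg (L₁ * L₁ᴴ + L₂ * L₂ᴴ), ← h, Matrix.neg_mul, Matrix.add_mul, trace_neg,
            trace_add, Matrix.mul_assoc, mul_nonsing_inv _ hS, Matrix.mul_one, trace_mul_cycle,
            nonsing_inv_mul _ hS, Matrix.one_mul]
  rw [← Complex.add_re, htr, trace_conjTranspose]
  simp only [Complex.neg_re, Complex.add_re, Complex.star_def, Complex.conj_re]
  ring

variable {A S₀ : Matrix ι ι ℂ} {θ₁ : Matrix ι κ₁ ℂ} {θ₂ : Matrix ι κ₂ ℂ} {S : ℝ → Matrix ι ι ℂ}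

local notation "Λ₁" => expSmulMul (-A) θ₁
local notation "Λ₂" => expSmulMul A θ₂

theorem lyapunov_of_hasDerivAt (h₀ : A * S₀ + S₀ * Aᴴ = -(θ₁ * θ₁ᴴ + θ₂ * θ₂ᴴ))
    (hS : ∀ t, HasDerivAt S (Λ₁ t * (Λ₁ t)ᴴ - Λ₂ t * (Λ₂ t)ᴴ) t) (hS0 : S 0 = S₀) (x : ℝ) :
    A * S x + S x * Aᴴ = -(Λ₁ x * (Λ₁ x)ᴴ + Λ₂ x * (Λ₂ x)ᴴ) := by
  set G₁ := fun t => Λ₁ t * (Λ₁ t)ᴴ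
  set G₂ := fun t => Λ₂ t * (Λ₂ t)ᴴ
  have hΦ : ∀ t, HasDerivAt (fun t => A * S t + S t * Aᴴ + (G₁ t + G₂ t)) 0 t := fun t => by
    refine (((hS t).const_mul A).add ((hS t).mul_const Aᴴ)).add
      ((hasDerivAt_expSmulMul_mul_conjTranspose (-A) θ₁ t).add
        (hasDerivAt_expSmulMul_mul_conjTranspose A θ₂ t)) |>.congr_deriv ?_
    simp only [conjTranspose_neg]
    noncomm_ring
  have hconst :=
    is_const_of_deriv_eq_zero (fun t => (hΦ t).differentiableAt) (fun t => (hΦ t).deriv) x 0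
  simp only [hS0, G₁, G₂, expSmulMul, zero_smul, NormedSpace.exp_zero, Matrix.one_mul, h₀] at hconst
  exact eq_neg_of_add_eq_zero_left (hconst.trans (neg_add_cancel _))

theorem posDef_of_lyapunov (hS₀ : S₀.PosDef)
    (hS : ∀ t, HasDerivAt S (Λ₁ t * (Λ₁ t)ᴴ - Λ₂ t * (Λ₂ t)ᴴ) t) (hS0 : S 0 = S₀)
    (hlyap : ∀ t, A * S t + S t * Aᴴ = -(Λ₁ t * (Λ₁ t)ᴴ + Λ₂ t * (Λ₂ t)ᴴ)) {x : ℝ} (hx : 0 ≤ x) :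
    (S x).PosDef := by
  set W := fun t : ℝ => exp (t • -A) * S t * (exp (t • -A))ᴴ
  have hW : ∀ t, HasDerivAt W
      ((2 : ℝ) • ((exp (t • -A) * Λ₁ t) * (exp (t • -A) * Λ₁ t)ᴴ)) t := fun t => by
    simp only [W, conjTranspose_exp_smul]
    refine (hasDerivAt_exp_smul_mul_mul_exp_smul (-A) (-A)ᴴ (hS t)).congr_deriv ?_
    have hc : Commute (-A) (exp (t • -A)) := ((Commute.refl _).smul_right t).exp_right
    have hc' : Commute (-A)ᴴ (exp (t • (-A)ᴴ)) := ((Commute.refl _).smul_right t).exp_right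
    rw [← Matrix.mul_assoc, ← Matrix.mul_assoc, hc.eq, Matrix.mul_assoc _ _ (-A)ᴴ, ← hc'.eq,
      conjTranspose_mul, conjTranspose_exp_smul]
    have hl := hlyap t
    generalize Λ₁ t = L₁ at hl ⊢
    generalize Λ₂ t = L₂ at hl ⊢
    generalize exp (t • -A) = E at hl ⊢
    generalize exp (t • (-A)ᴴ) = E' at hl ⊢
    calc _ = E * (-(A * S t + S t * Aᴴ) + (L₁ * L₁ᴴ - L₂ * L₂ᴴ)) * E' := by
          rw [conjTranspose_neg]; noncomm_ring
      _ = _ := by rw [hl, two_smul]; noncomm_ring; simp only [Matrix.mul_assoc]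
  have hSW : ∀ t, S t = exp (t • A) * W t * (exp (t • A))ᴴ := fun t => by
    simp only [W, ← Matrix.mul_assoc, exp_smul_mul_exp_smul_neg, Matrix.one_mul]
    rw [Matrix.mul_assoc, ← conjTranspose_mul, exp_smul_mul_exp_smul_neg, conjTranspose_one,
      Matrix.mul_one]
  have hWx : (W x).PosDef := by
    refine PosDef.of_hasDerivAt_posSemidef hW
      (fun t => (posSemidef_self_mul_conjTranspose _).smul zero_le_two) ?_ hx ?_
    · simpa [W, hS0] using hS₀
    · exact isHermitian_mul_mul_conjTranspose _ <| IsHermitian.of_hasDerivAt hS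
        (fun t => (isHermitian_mul_conjTranspose_self _).sub (isHermitian_mul_conjTranspose_self _))
        (hS0 ▸ hS₀.isHermitian) x
  rw [hSW x]
  exact hWx.mul_mul_conjTranspose_same (vecMul_injective_iff_isUnit.2 (isUnit_exp _))

end Lyapunov

theorem fromCols_mul_sigJ_mul_conjTranspose {ι : Type*} {m₁ m₂ : ℕ} (L₁ : Matrix ι (Fin m₁) ℂ)
    (L₂ : Matrix ι (Fin m₂) ℂ) :
    fromCols L₁ L₂ * sigJ m₁ m₂ * (fromCols L₁ L₂)ᴴ = L₁ * L₁ᴴ - L₂ * L₂ᴴ := by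
  rw [sigJ, fromCols_mul_fromBlocks, conjTranspose_fromCols_eq_fromRows_conjTranspose,
    fromCols_mul_fromRows]
  simp [sub_eq_add_neg]

/-- the pseudo-exponential potential `v(x) = 2ϑ₁*e^{ixα*}S(x)⁻¹e^{ixα}ϑ₂` is
bounded on `[0,∞)` in the operator norm induced by the `ℓ²` vector norm. -/
theorem pseudoExponential_potential_bounded
    {n m₁ m₂ : ℕ} (α S₀ : Matrix (Fin n) (Fin n) ℂ)
    (θ₁ : Matrix (Fin n) (Fin m₁) ℂ) (θ₂ : Matrix (Fin n) (Fin m₂) ℂ)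
    (hadm : Admissible α S₀ θ₁ θ₂)
    (Λ : ℝ → Matrix (Fin n) (Fin m₁ ⊕ Fin m₂) ℂ)
    (hΛ : ∀ x : ℝ, Λ x = Matrix.fromCols
      (NormedSpace.exp ((-(Complex.I * (x : ℂ))) • α) * θ₁)
      (NormedSpace.exp ((Complex.I * (x : ℂ)) • α) * θ₂))
    (S : ℝ → Matrix (Fin n) (Fin n) ℂ)
    (hS : ∀ (x : ℝ) (i j : Fin n),
      S x i j = S₀ i j + ∫ t in (0:ℝ)..x, (Λ t * sigJ m₁ m₂ * (Λ t)ᴴ) i j)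
    (v : ℝ → Matrix (Fin m₁) (Fin m₂) ℂ)
    (hv : ∀ x : ℝ, v x = (2:ℂ) • (θ₁ᴴ * NormedSpace.exp ((Complex.I * (x : ℂ)) • αᴴ) *
      (S x)⁻¹ * NormedSpace.exp ((Complex.I * (x : ℂ)) • α) * θ₂)) :
    ∃ M : ℝ, 0 < M ∧ ∀ x : ℝ, 0 ≤ x → ‖v x‖ ≤ M := by
  obtain ⟨hS₀, hadm⟩ := hadm
  set A := Complex.I • α
  set Λ₁ := expSmulMul (-A) θ₁
  set Λ₂ := expSmulMul A θ₂
  have hsmul : ∀ (x : ℝ) (c : ℂ) (B : Matrix (Fin n) (Fin n) ℂ), (c * x) • B = x • c • B :=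
    fun x c B => by rw [← Complex.coe_smul, smul_smul, mul_comm]
  have hcols : ∀ x, Λ x = fromCols (Λ₁ x) (Λ₂ x) := fun x => by
    rw [hΛ, ← neg_mul, hsmul, hsmul, neg_smul]
    rfl
  have hv' : ∀ x, v x = (2 : ℂ) • ((Λ₁ x)ᴴ * (S x)⁻¹ * Λ₂ x) := fun x => by
    rw [hv, hsmul, hsmul]
    simp only [Λ₁, Λ₂, A, expSmulMul, conjTranspose_mul, conjTranspose_exp_smul, conjTranspose_neg,
      conjTranspose_smul, Complex.star_def, Complex.conj_I, neg_smul, neg_neg, Matrix.mul_assoc]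
  have hderiv : ∀ x, HasDerivAt S (Λ₁ x * (Λ₁ x)ᴴ - Λ₂ x * (Λ₂ x)ᴴ) x :=
    hasDerivAt_of_entry_eq_add_integral (S₀ := S₀)
      (continuous_iff_continuousAt.2 fun t =>
        ((hasDerivAt_expSmulMul_mul_conjTranspose _ _ t).sub
          (hasDerivAt_expSmulMul_mul_conjTranspose _ _ t)).continuousAt)
      (fun x i j => by simp only [hS, hcols, fromCols_mul_sigJ_mul_conjTranspose])
  have hS0 : S 0 = S₀ := by
    ext i j
    rw [hS, intervalIntegral.integral_same, add_zero]
  have h₀ : A * S₀ + S₀ * Aᴴ = -(θ₁ * θ₁ᴴ + θ₂ * θ₂ᴴ) := by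
    rw [conjTranspose_smul, Complex.star_def, Complex.conj_I, Matrix.smul_mul, Matrix.mul_smul,
      neg_smul, ← sub_eq_add_neg, ← smul_sub, hadm, smul_smul, Complex.I_mul_I, neg_one_smul]
  have hlyap := lyapunov_of_hasDerivAt h₀ hderiv hS0
  refine ⟨max (-2 * A.trace.re) 1, lt_max_of_lt_right one_pos, fun x hx => ?_⟩
  have hpos := posDef_of_lyapunov hS₀ hderiv hS0 hlyap hx
  calc ‖v x‖ = 2 * ‖(Λ₁ x)ᴴ * (S x)⁻¹ * Λ₂ x‖ := by
        rw [hv', norm_smul]; norm_num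
    _ ≤ _ := hpos.two_mul_l2_opNorm_conjTranspose_mul_inv_mul_le _ _
    _ = -2 * A.trace.re := re_trace_conjTranspose_mul_inv_mul_add_eq_of_lyapunov
        ((isUnit_iff_isUnit_det _).mp hpos.isUnit) (hlyap x)
    _ ≤ _ := le_max_left _ _
end

section
/- Let Σ₀ = {α, S₀, ϑ₁, ϑ₂} be a strongly admissible quadruple. For k ∈ ℕ₀ set Λ_k = [(I_n + iα⁻¹)^kϑ₁, (I_n − iα⁻¹)^kϑ₂], S_{k+1} = S_k + α⁻¹S_kα^{−*} + α⁻¹Λ_k j Λ_k* α^{−*}, W_{Σ_k}(λ) = I_m + iΛ_k*S_k⁻¹(λI_n − α)⁻¹Λ_k, and C_k = j + Λ_k*S_k⁻¹Λ_k − Λ_{k+1}*S_{k+1}⁻¹Λ_{k+1}. Then for every k ∈ ℕ₀ and every λ ∈ ℂ with λ ≠ 0 and λ not an eigenvalue of α, the identity W_{Σ_{k+1}}(λ)(I_m − (i/λ)j) = (I_m − (i/λ)C_k) W_{Σ_k}(λ) holds. -/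
/-!
Since `Λ_{k+1} = Λ_k + iα⁻¹Λ_k j`, an induction on `k` shows that every `Σ_k` satisfies the
Lyapunov identity `αS_k − S_kα* = iΛ_kΛ_k*`, and, writing `M_k = α⁻¹(I_n + iα⁻¹)^kϑ₁`, that
`S_{k+1} = (I_n − iα⁻¹) S_k (I_n − iα⁻¹)* + 2 M_kM_k*` stays positive definite: a vector
killed by `(I_n − iα⁻¹)*` and `M_k*` would be an eigenvector of `α*` annihilated by `ϑ₁*`, which
controllability of `(α, ϑ₁)` forbids. With `S_k`, `S_{k+1}`, `α` and `λ − α` invertible, the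
identity is then pure noncommutative algebra: expand both sides, use the resolvent identity
`λ(λI_n − α)⁻¹ = I_n + α(λI_n − α)⁻¹`, the Lyapunov identity for `Σ_k`, and the mixed identity
`Λ_{k+1}Λ_k* = i(S_{k+1}α* − αS_k − α⁻¹S_k)`.
-/

open Matrix
open scoped ComplexOrder

/-- A pair `(α, θ)` is controllable if the columns of `θ, αθ, …, α^{n−1}θ` span `ℂⁿ`. -/
def Controllable {n p : ℕ} (α : Matrix (Fin n) (Fin n) ℂ) (θ : Matrix (Fin n) (Fin p) ℂ) :
    Prop :=
  Submodule.span ℂ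
    {v : Fin n → ℂ | ∃ k : ℕ, k < n ∧ ∃ j : Fin p, v = fun i => (α ^ k * θ) i j} = ⊤

open Complex (I)

theorem Matrix.pow_mulVec_eq_smul {m R : Type*} [Fintype m] [DecidableEq m] [CommSemiring R]
    {A : Matrix m m R} {x : m → R} {c : R} (h : A *ᵥ x = c • x) (k : ℕ) :
    A ^ k *ᵥ x = c ^ k • x := by
  induction k with
  | zero => simp
  | succ k ih => rw [pow_succ, ← mulVec_mulVec, h, mulVec_smul, ih, smul_smul, pow_succ']

theorem star_dotProduct_mul_conjTranspose_mulVec {m l R : Type*} [Fintype m] [Fintype l]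
    [CommSemiring R] [StarRing R] (A : Matrix m l R) (x : m → R) :
    star x ⬝ᵥ ((A * Aᴴ) *ᵥ x) = star (Aᴴ *ᵥ x) ⬝ᵥ (Aᴴ *ᵥ x) := by
  rw [← mulVec_mulVec, dotProduct_mulVec, star_mulVec, conjTranspose_conjTranspose]

theorem star_dotProduct_mul_mul_conjTranspose_mulVec {m l R : Type*} [Fintype m] [Fintype l]
    [CommSemiring R] [StarRing R] (A : Matrix m l R) (T : Matrix l l R) (x : m → R) :
    star x ⬝ᵥ ((A * T * Aᴴ) *ᵥ x) = star (Aᴴ *ᵥ x) ⬝ᵥ (T *ᵥ (Aᴴ *ᵥ x)) := by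
  rw [← mulVec_mulVec, ← mulVec_mulVec, dotProduct_mulVec, star_mulVec,
    conjTranspose_conjTranspose, dotProduct_mulVec]

theorem Matrix.PosDef.mul_mul_conjTranspose_add_mul_mul_conjTranspose {R n l m : Type*}
    [Fintype n] [Fintype l] [Fintype m] [CommRing R] [PartialOrder R] [StarRing R]
    [IsOrderedAddMonoid R] {S : Matrix l l R} {P : Matrix m m R} (hS : S.PosDef) (hP : P.PosDef)
    (B : Matrix n l R) (M : Matrix n m R) (h : ∀ x, Bᴴ *ᵥ x = 0 → Mᴴ *ᵥ x = 0 → x = 0) :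
    (B * S * Bᴴ + M * P * Mᴴ).PosDef := by
  refine .of_dotProduct_mulVec_pos ((hS.posSemidef.mul_mul_conjTranspose_same B).add
    (hP.posSemidef.mul_mul_conjTranspose_same M)).isHermitian fun x hx => ?_
  rw [add_mulVec, dotProduct_add, star_dotProduct_mul_mul_conjTranspose_mulVec,
    star_dotProduct_mul_mul_conjTranspose_mulVec]
  by_cases hB : Bᴴ *ᵥ x = 0
  · rw [hB, mulVec_zero, dotProduct_zero, zero_add]
    exact hP.dotProduct_mulVec_pos fun hM => hx (h x hB hM)
  · exact add_pos_of_pos_of_nonneg (hS.dotProduct_mulVec_pos hB)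
      (hP.posSemidef.dotProduct_mulVec_nonneg _)

section Controllability

variable {n p : ℕ} {α : Matrix (Fin n) (Fin n) ℂ} {θ : Matrix (Fin n) (Fin p) ℂ}

theorem Controllable.eq_zero_of_forall_conjTranspose_mulVec_pow (h : Controllable α θ)
    {x : Fin n → ℂ} (hx : ∀ k, θᴴ *ᵥ ((αᴴ) ^ k *ᵥ x) = 0) : x = 0 := by
  have hperp : ∀ v ∈ Submodule.span ℂ
      {v : Fin n → ℂ | ∃ k : ℕ, k < n ∧ ∃ j : Fin p, v = fun i => (α ^ k * θ) i j},
      v ⬝ᵥ star x = 0 := by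
    intro v hv
    induction hv using Submodule.span_induction with
    | mem v hv =>
      obtain ⟨k, -, j, rfl⟩ := hv
      have hcol : (fun i => (α ^ k * θ) i j) ⬝ᵥ star x = star ((θᴴ *ᵥ ((αᴴ) ^ k *ᵥ x)) j) := by
        rw [mulVec_mulVec, ← conjTranspose_pow, ← conjTranspose_mul]
        simp [dotProduct, mulVec, mul_comm]
      rw [hcol, hx k, Pi.zero_apply, star_zero]
    | zero => exact zero_dotProduct _
    | add v w _ _ hv hw => rw [add_dotProduct, hv, hw, add_zero]
    | smul c v _ hv => rw [smul_dotProduct, hv, smul_zero]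
  exact dotProduct_self_star_eq_zero.mp (hperp x (h ▸ Submodule.mem_top))

theorem Controllable.eq_zero_of_mulVec_eq_smul (h : Controllable α θ) {x : Fin n → ℂ} {c : ℂ}
    (hαx : αᴴ *ᵥ x = c • x) (hθx : θᴴ *ᵥ x = 0) : x = 0 :=
  h.eq_zero_of_forall_conjTranspose_mulVec_pow fun k => by
    rw [pow_mulVec_eq_smul hαx, mulVec_smul, hθx, smul_zero]

end Controllability

theorem Admissible.isUnit {n m₁ m₂ : ℕ} {α S₀ : Matrix (Fin n) (Fin n) ℂ}
    {θ₁ : Matrix (Fin n) (Fin m₁) ℂ} {θ₂ : Matrix (Fin n) (Fin m₂) ℂ}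
    (h : Admissible α S₀ θ₁ θ₂) (hc : Controllable α θ₁) : IsUnit α := by
  rw [← isUnit_conjTranspose, isUnit_iff_isUnit_det, isUnit_iff_ne_zero, Ne,
    ← exists_mulVec_eq_zero_iff]
  rintro ⟨x, hx0, hαx⟩
  have hq : star x ⬝ᵥ ((α * S₀ - S₀ * αᴴ) *ᵥ x) = 0 := by
    rw [sub_mulVec, dotProduct_sub, ← mulVec_mulVec, ← mulVec_mulVec, hαx, mulVec_zero,
      dotProduct_zero, sub_zero, dotProduct_mulVec, ← conjTranspose_conjTranspose α,
      ← star_mulVec, hαx, star_zero, zero_dotProduct]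
  rw [h.2, smul_mulVec, dotProduct_smul, smul_eq_mul, mul_eq_zero, add_mulVec, dotProduct_add,
    star_dotProduct_mul_conjTranspose_mulVec, star_dotProduct_mul_conjTranspose_mulVec] at hq
  have hθ₁x : θ₁ᴴ *ᵥ x = 0 := by
    refine dotProduct_star_self_eq_zero.mp (le_antisymm ?_ (dotProduct_star_self_nonneg _))
    rw [← hq.resolve_left Complex.I_ne_zero]
    exact le_add_of_nonneg_right (dotProduct_star_self_nonneg _)
  exact hx0 (hc.eq_zero_of_mulVec_eq_smul (c := 0) (by rw [hαx, zero_smul]) hθ₁x)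

section Signature

variable {ι : Type*} {m₁ m₂ : ℕ}

theorem sigJ_mul_self : sigJ m₁ m₂ * sigJ m₁ m₂ = 1 := by
  simp [sigJ, fromBlocks_multiply, fromBlocks_one]

theorem sigJ_conjTranspose : (sigJ m₁ m₂)ᴴ = sigJ m₁ m₂ := by
  simp [sigJ, fromBlocks_conjTranspose]

theorem fromCols_mul_sigJ (A₁ : Matrix ι (Fin m₁) ℂ) (A₂ : Matrix ι (Fin m₂) ℂ) :
    fromCols A₁ A₂ * sigJ m₁ m₂ = fromCols A₁ (-A₂) := by
  simp [sigJ, fromCols_mul_fromBlocks]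

theorem fromCols_mul_conjTranspose_fromCols (A₁ : Matrix ι (Fin m₁) ℂ)
    (A₂ : Matrix ι (Fin m₂) ℂ) :
    fromCols A₁ A₂ * (fromCols A₁ A₂)ᴴ = A₁ * A₁ᴴ + A₂ * A₂ᴴ := by
  rw [conjTranspose_fromCols_eq_fromRows_conjTranspose, fromCols_mul_fromRows]

theorem fromCols_mul_sigJ_mul_conjTranspose_fromCols (A₁ : Matrix ι (Fin m₁) ℂ)
    (A₂ : Matrix ι (Fin m₂) ℂ) :
    fromCols A₁ A₂ * sigJ m₁ m₂ * (fromCols A₁ A₂)ᴴ = A₁ * A₁ᴴ - A₂ * A₂ᴴ := by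
  rw [fromCols_mul_sigJ, conjTranspose_fromCols_eq_fromRows_conjTranspose, fromCols_mul_fromRows,
    Matrix.neg_mul, sub_eq_add_neg]

theorem fromCols_one_add_smul_mul_one_sub_smul_mul [Fintype ι] [DecidableEq ι]
    (A : Matrix ι ι ℂ) (A₁ : Matrix ι (Fin m₁) ℂ) (A₂ : Matrix ι (Fin m₂) ℂ) :
    fromCols ((1 + I • A) * A₁) ((1 - I • A) * A₂) =
      fromCols A₁ A₂ + I • (A * fromCols A₁ A₂ * sigJ m₁ m₂) := by
  rw [Matrix.mul_assoc, fromCols_mul_sigJ, mul_fromCols]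
  ext i (j | j) <;> simp [Matrix.add_mul, sub_eq_add_neg]

end Signature

section Recurrence

variable {ι κ : Type*} [Fintype ι] [DecidableEq ι] [Fintype κ]
  {α S S' : Matrix ι ι ℂ} {L L' : Matrix ι κ ℂ}

theorem conjTranspose_inv_mul_conjTranspose (hα : IsUnit α) : (α⁻¹)ᴴ * αᴴ = 1 := by
  rw [← conjTranspose_mul, mul_nonsing_inv _ ((isUnit_iff_isUnit_det α).mp hα), conjTranspose_one]

theorem mul_conjTranspose_inv_sub_inv_mul {T : Matrix ι ι ℂ} (hα : IsUnit α)
    (h : α * S - S * αᴴ = T) : S * (α⁻¹)ᴴ - α⁻¹ * S = α⁻¹ * T * (α⁻¹)ᴴ := by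
  have hαH : IsUnit αᴴ.det := by rwa [det_conjTranspose, isUnit_star, ← isUnit_iff_isUnit_det]
  rw [← h, conjTranspose_nonsing_inv, Matrix.mul_sub, Matrix.sub_mul,
    nonsing_inv_mul_cancel_left _ _ ((isUnit_iff_isUnit_det α).mp hα), ← Matrix.mul_assoc α⁻¹,
    mul_nonsing_inv_cancel_right _ _ hαH]

theorem lyapunov_succ [DecidableEq κ] {J : Matrix κ κ ℂ} (hα : IsUnit α) (hJ : J * J = 1)
    (hJH : Jᴴ = J) (h : α * S - S * αᴴ = I • (L * Lᴴ))
    (hS' : S' = S + α⁻¹ * S * (α⁻¹)ᴴ + α⁻¹ * (L * J * Lᴴ) * (α⁻¹)ᴴ)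
    (hL' : L' = L + I • (α⁻¹ * L * J)) :
    α * S' - S' * αᴴ = I • (L' * L'ᴴ) := by
  have hconj := mul_conjTranspose_inv_sub_inv_mul hα h
  subst hS' hL'
  simp only [Matrix.mul_add, Matrix.add_mul, Matrix.smul_mul, Matrix.mul_smul, smul_add, smul_smul,
    conjTranspose_add, conjTranspose_smul, conjTranspose_mul, hJH, Complex.star_def,
    Complex.conj_I, Matrix.mul_assoc,
    mul_nonsing_inv_cancel_left _ _ ((isUnit_iff_isUnit_det α).mp hα),
    conjTranspose_inv_mul_conjTranspose hα, Matrix.mul_one, Matrix.mul_neg, smul_neg, neg_smul,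
    Complex.I_mul_I, one_smul] at hconj ⊢
  simp only [← Matrix.mul_assoc J, hJ, Matrix.one_mul] at hconj ⊢
  linear_combination (norm := module) h + hconj

theorem succ_mul_conjTranspose {J : Matrix κ κ ℂ} (hα : IsUnit α)
    (h : α * S - S * αᴴ = I • (L * Lᴴ))
    (hS' : S' = S + α⁻¹ * S * (α⁻¹)ᴴ + α⁻¹ * (L * J * Lᴴ) * (α⁻¹)ᴴ)
    (hL' : L' = L + I • (α⁻¹ * L * J)) :
    L' * Lᴴ = I • (S' * αᴴ) - I • (α * S) - I • (α⁻¹ * S) := by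
  subst hS' hL'
  simp only [Matrix.add_mul, Matrix.smul_mul, smul_add, Matrix.mul_assoc,
    conjTranspose_inv_mul_conjTranspose hα, Matrix.mul_one]
  linear_combination (norm := match_scalars) I • h <;> grind [Complex.I_sq]

theorem recurrence_eq_conj_add {κ₁ κ₂ : Type*} [Fintype κ₁] [Fintype κ₂] [DecidableEq κ₁]
    {L₁ : Matrix ι κ₁ ℂ} {L₂ : Matrix ι κ₂ ℂ} (hα : IsUnit α)
    (h : α * S - S * αᴴ = I • (L₁ * L₁ᴴ + L₂ * L₂ᴴ)) :
    S + α⁻¹ * S * (α⁻¹)ᴴ + α⁻¹ * (L₁ * L₁ᴴ - L₂ * L₂ᴴ) * (α⁻¹)ᴴ =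
      (1 - I • α⁻¹) * S * (1 - I • α⁻¹)ᴴ + (α⁻¹ * L₁) * (2 : Matrix κ₁ κ₁ ℂ) * (α⁻¹ * L₁)ᴴ := by
  have hconj := mul_conjTranspose_inv_sub_inv_mul hα h
  rw [← one_add_one_eq_two, Matrix.mul_add, Matrix.add_mul, Matrix.mul_one]
  simp only [Matrix.mul_add, Matrix.add_mul, Matrix.mul_sub, Matrix.sub_mul, Matrix.smul_mul,
    Matrix.mul_smul, smul_add, smul_sub, smul_smul, conjTranspose_sub, conjTranspose_smul,
    conjTranspose_mul, conjTranspose_one, Complex.star_def, Complex.conj_I, Matrix.mul_assoc,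
    Matrix.mul_one, Matrix.one_mul, neg_smul, Complex.I_mul_I, one_smul, sub_neg_eq_add] at hconj ⊢
  linear_combination (norm := match_scalars) (-I) • hconj <;> grind [Complex.I_sq]

theorem transfer_function_step [DecidableEq κ] {J : Matrix κ κ ℂ} {lam : ℂ}
    (hα : IsUnit α) (hSu : IsUnit S) (hS'u : IsUnit S') (hR : IsUnit (lam • 1 - α)) (hlam : lam ≠ 0)
    (hJ : J * J = 1) (hJH : Jᴴ = J) (h : α * S - S * αᴴ = I • (L * Lᴴ))
    (hS' : S' = S + α⁻¹ * S * (α⁻¹)ᴴ + α⁻¹ * (L * J * Lᴴ) * (α⁻¹)ᴴ)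
    (hL' : L' = L + I • (α⁻¹ * L * J)) :
    (1 + I • (L'ᴴ * S'⁻¹ * (lam • 1 - α)⁻¹ * L')) * (1 - (I / lam) • J) =
      (1 - (I / lam) • (J + Lᴴ * S⁻¹ * L - L'ᴴ * S'⁻¹ * L')) *
        (1 + I • (Lᴴ * S⁻¹ * (lam • 1 - α)⁻¹ * L)) := by
  have hαd := (isUnit_iff_isUnit_det α).mp hα
  have hαHd := (isUnit_iff_isUnit_det αᴴ).mp ((isUnit_conjTranspose α).mpr hα)
  have hSd := (isUnit_iff_isUnit_det S).mp hSu
  have hS'd := (isUnit_iff_isUnit_det S').mp hS'u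
  have hmixed := succ_mul_conjTranspose hα h hS' hL'
  set R := (lam • 1 - α)⁻¹ with hRdef
  have hres : lam • R = 1 + α * R := by
    have := mul_nonsing_inv _ ((isUnit_iff_isUnit_det _).mp hR)
    rw [Matrix.sub_mul, Matrix.smul_mul, Matrix.one_mul] at this
    rw [← this, sub_add_cancel]
  have hαR : Commute α R := by
    have hαX : Commute α (lam • 1 - α) :=
      ((Commute.one_right α).smul_right lam).sub_right (Commute.refl α)
    simpa [hRdef] using Matrix.Commute.zpow_right hαX (-1)
  have hαiR : Commute α⁻¹ R := by simpa using Matrix.Commute.zpow_left hαR (-1)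
  have hRαi : ∀ X : Matrix ι κ ℂ, R * (α⁻¹ * X) = α⁻¹ * (R * X) := fun X => by
    rw [← Matrix.mul_assoc, ← Matrix.mul_assoc, hαiR.eq]
  -- the resolvent identity, the Lyapunov identities and the definition of `L'`, each multiplied
  -- into the shape in which it occurs after expanding the goal
  have hres' := congrArg (fun T => lam⁻¹ • (L'ᴴ * S'⁻¹ * T * L')) hres
  have hres₀ := congrArg (fun T => lam⁻¹ • (Lᴴ * S⁻¹ * T * L)) hres
  have hlyap₀ := congrArg (fun T => Lᴴ * S⁻¹ * T * S⁻¹ * R * L) h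
  have hmixed' := congrArg (fun T => L'ᴴ * S'⁻¹ * T * S⁻¹ * R * L) hmixed
  have hsuccα := congrArg (fun T => L'ᴴ * S'⁻¹ * α * R * T) hL'
  have hsuccJ := congrArg (fun T => L'ᴴ * S'⁻¹ * R * (T * J)) hL'
  have hsuccH := congrArg (fun T => Tᴴ * αᴴ * S⁻¹ * R * L) hL'
  simp only [Matrix.mul_add, Matrix.add_mul, Matrix.mul_sub, Matrix.sub_mul, Matrix.smul_mul,
    Matrix.mul_smul, smul_add, smul_sub, smul_smul, inv_mul_cancel₀ hlam, one_smul,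
    Matrix.mul_assoc, Matrix.mul_one, Matrix.one_mul, conjTranspose_add, conjTranspose_smul,
    conjTranspose_mul, hJH, hJ, Complex.star_def, Complex.conj_I, neg_smul, Matrix.neg_mul,
    conjTranspose_nonsing_inv, hRαi, mul_nonsing_inv_cancel_left _ _ hαd,
    nonsing_inv_mul_cancel_left _ _ hαHd, nonsing_inv_mul_cancel_left _ _ hSd,
    mul_nonsing_inv_cancel_left _ _ hSd, nonsing_inv_mul_cancel_left _ _ hS'd]
    at hres' hres₀ hlyap₀ hmixed' hsuccα hsuccJ hsuccH ⊢
  linear_combination (norm := match_scalars)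
    I • hres' - I • hres₀ + lam⁻¹ • (-I • hlyap₀ + hmixed' + I • hsuccα + hsuccJ + I • hsuccH)
    <;> grind [Complex.I_sq]

end Recurrence

theorem Controllable.posDef_recurrence {κ : Type*} [Fintype κ] {n m₁ : ℕ}
    {α S : Matrix (Fin n) (Fin n) ℂ} {θ₁ : Matrix (Fin n) (Fin m₁) ℂ} {L₂ : Matrix (Fin n) κ ℂ}
    (hc : Controllable α θ₁) (hα : IsUnit α) (hS : S.PosDef) (k : ℕ)
    (h : α * S - S * αᴴ =
      I • ((1 + I • α⁻¹) ^ k * θ₁ * ((1 + I • α⁻¹) ^ k * θ₁)ᴴ + L₂ * L₂ᴴ)) :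
    (S + α⁻¹ * S * (α⁻¹)ᴴ +
      α⁻¹ * ((1 + I • α⁻¹) ^ k * θ₁ * ((1 + I • α⁻¹) ^ k * θ₁)ᴴ - L₂ * L₂ᴴ) * (α⁻¹)ᴴ).PosDef := by
  rw [recurrence_eq_conj_add hα h]
  refine hS.mul_mul_conjTranspose_add_mul_mul_conjTranspose (.ofNat 2) _ _ fun x hB hM => ?_
  simp only [conjTranspose_sub, conjTranspose_one, conjTranspose_smul, Complex.star_def,
    Complex.conj_I, neg_smul, sub_neg_eq_add, add_mulVec, one_mulVec, smul_mulVec] at hB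
  have hβx : (α⁻¹)ᴴ *ᵥ x = I • x := by
    linear_combination (norm := match_scalars) (-I) • hB <;> grind [Complex.I_sq]
  have hαx : αᴴ *ᵥ x = (-I) • x := by
    have hx : αᴴ *ᵥ ((α⁻¹)ᴴ *ᵥ x) = x := by
      rw [mulVec_mulVec, ← conjTranspose_mul,
        nonsing_inv_mul _ ((isUnit_iff_isUnit_det α).mp hα), conjTranspose_one, one_mulVec]
    rw [hβx, mulVec_smul] at hx
    linear_combination (norm := match_scalars) (-I) • hx <;> grind [Complex.I_sq]
  have hPx : (1 + I • α⁻¹)ᴴ *ᵥ x = (2 : ℂ) • x := by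
    rw [conjTranspose_add, conjTranspose_one, conjTranspose_smul, Complex.star_def,
      Complex.conj_I, add_mulVec, one_mulVec, smul_mulVec, hβx, smul_smul, neg_mul,
      Complex.I_mul_I, neg_neg, one_smul, two_smul]
  rw [conjTranspose_mul, conjTranspose_mul, conjTranspose_pow, ← mulVec_mulVec,
    ← mulVec_mulVec, hβx, mulVec_smul, pow_mulVec_eq_smul hPx, mulVec_smul, mulVec_smul] at hM
  have hθx : θ₁ᴴ *ᵥ x = 0 := by simpa [Complex.I_ne_zero] using hM
  exact hc.eq_zero_of_mulVec_eq_smul hαx hθx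

/-- the key identity
`W_{Σ_{k+1}}(λ)(I − (i/λ)j) = (I − (i/λ)C_k) W_{Σ_k}(λ)`. -/
theorem transfer_function_identity_discrete
    {n m₁ m₂ : ℕ} (α S₀ : Matrix (Fin n) (Fin n) ℂ)
    (θ₁ : Matrix (Fin n) (Fin m₁) ℂ) (θ₂ : Matrix (Fin n) (Fin m₂) ℂ)
    (hadm : Admissible α S₀ θ₁ θ₂) (hctrl : Controllable α θ₁)
    (Λ : ℕ → Matrix (Fin n) (Fin m₁ ⊕ Fin m₂) ℂ)
    (hΛ : ∀ k : ℕ, Λ k = Matrix.fromCols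
      ((1 + Complex.I • α⁻¹) ^ k * θ₁) ((1 - Complex.I • α⁻¹) ^ k * θ₂))
    (S : ℕ → Matrix (Fin n) (Fin n) ℂ)
    (hS0 : S 0 = S₀)
    (hS : ∀ k : ℕ, S (k + 1) =
      S k + α⁻¹ * S k * (α⁻¹)ᴴ + α⁻¹ * (Λ k * sigJ m₁ m₂ * (Λ k)ᴴ) * (α⁻¹)ᴴ)
    (W : ℕ → ℂ → Matrix (Fin m₁ ⊕ Fin m₂) (Fin m₁ ⊕ Fin m₂) ℂ)
    (hW : ∀ (k : ℕ) (lam : ℂ),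
      W k lam = 1 + Complex.I • ((Λ k)ᴴ * (S k)⁻¹ * (lam • 1 - α)⁻¹ * Λ k))
    (C : ℕ → Matrix (Fin m₁ ⊕ Fin m₂) (Fin m₁ ⊕ Fin m₂) ℂ)
    (hC : ∀ k : ℕ, C k = sigJ m₁ m₂ + (Λ k)ᴴ * (S k)⁻¹ * Λ k
      - (Λ (k + 1))ᴴ * (S (k + 1))⁻¹ * Λ (k + 1)) :
    ∀ (k : ℕ) (lam : ℂ), lam ≠ 0 → lam ∉ spectrum ℂ α →
      W (k + 1) lam * (1 - (Complex.I / lam) • sigJ m₁ m₂) =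
        (1 - (Complex.I / lam) • C k) * W k lam := by
  have hα : IsUnit α := hadm.isUnit hctrl
  have hΛsucc : ∀ k, Λ (k + 1) = Λ k + I • (α⁻¹ * Λ k * sigJ m₁ m₂) := fun k => by
    rw [hΛ, hΛ, pow_succ', pow_succ', Matrix.mul_assoc, Matrix.mul_assoc,
      fromCols_one_add_smul_mul_one_sub_smul_mul]
  have hlyap : ∀ k, α * S k - S k * αᴴ = I • (Λ k * (Λ k)ᴴ) := by
    intro k
    induction k with
    | zero => simpa [hS0, hΛ 0, fromCols_mul_conjTranspose_fromCols] using hadm.2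
    | succ k ih => exact lyapunov_succ hα sigJ_mul_self sigJ_conjTranspose ih (hS k) (hΛsucc k)
  have hpos : ∀ k, (S k).PosDef := by
    intro k
    induction k with
    | zero => exact hS0 ▸ hadm.1
    | succ k ih =>
      have h := hlyap k
      rw [hΛ k, fromCols_mul_conjTranspose_fromCols] at h
      rw [hS k, hΛ k, fromCols_mul_sigJ_mul_conjTranspose_fromCols]
      exact hctrl.posDef_recurrence hα ih k h
  intro k lam hlam hspec
  have hR : IsUnit (lam • 1 - α) := by
    simpa [Algebra.algebraMap_eq_smul_one] using spectrum.notMem_iff.mp hspec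
  rw [hW, hW, hC]
  exact transfer_function_step hα (hpos k).isUnit (hpos (k + 1)).isUnit hR hlam sigJ_mul_self
    sigJ_conjTranspose (hlyap k) (hS k) (hΛsucc k)
end
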